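/- For a prime p ≥ 5, the integer ((p − 1) + C(2p − 1, p − 1))/p is congruent to 1 modulo p². -/

import Mathlib

open Finset

lemma wolstenholme (p : ℕ) (hp : p.Prime) (h5 : 5 ≤ p) :
    Nat.choose (2 * p - 1) (p - 1) ≡ 1 [MOD p ^ 3] := by
  haveI : Fact p.Prime := ⟨hp⟩
  haveI : NeZero p := ⟨hp.ne_zero⟩
  -- the sum of inverse squares is 0
  have hsum0 : ∑ x : ZMod p, (x⁻¹)^2 = 0 := by
    have h2 : ∑ x : ZMod p, x^2 = 0 :=
      FiniteField.sum_pow_lt_card_sub_one (K := ZMod p) 2 (by rw [ZMod.card p]; omega)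
    rw [← h2]
    exact Fintype.sum_equiv (Equiv.inv (ZMod p)) _ _ (fun x => rfl)
  -- transfer to Ioo
  have hIoo : ∑ i ∈ Ioo 0 p, (((i : ZMod p))⁻¹)^2 = 0 := by
    have h1 : ∑ i ∈ range p, (((i : ZMod p))⁻¹)^2 = ∑ x : ZMod p, (x⁻¹)^2 := by
      refine Finset.sum_nbij' (fun i => (i : ZMod p)) (fun x => x.val) ?_ ?_ ?_ ?_ ?_
      · intro a _; exact mem_univ _
      · intro x _; exact mem_range.mpr (ZMod.val_lt x)
      · intro a ha; simp [ZMod.val_natCast_of_lt (mem_range.mp ha)]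
      · intro x _; simp [ZMod.natCast_val, ZMod.cast_id]
      · intro a _; rfl
    have h2 : range p = insert 0 (Ioo 0 p) := by
      ext i; simp [Finset.mem_insert, Finset.mem_Ioo]; omega
    rw [h2, Finset.sum_insert (by simp)] at h1
    simp only [Nat.cast_zero, inv_zero, ne_eq, OfNat.ofNat_ne_zero,
      not_false_eq_true, zero_pow, zero_add] at h1
    rw [h1, hsum0]
  -- a k = choose p k / p
  set a : ℕ → ℕ := fun k => p.choose k / p with ha
  have hak : ∀ k, 0 < k → k < p → p.choose k = p * a k := by
    intro k hk1 hk2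
    exact (Nat.mul_div_cancel' (hp.dvd_choose_self (by omega) hk2)).symm
  have hka : ∀ k, 0 < k → k < p → k * a k = (p-1).choose (k-1) := by
    intro k hk1 hk2
    have h := Nat.add_one_mul_choose_eq (p-1) (k-1)
    have e1 : p - 1 + 1 = p := by omega
    have e2 : k - 1 + 1 = k := by omega
    rw [e1, e2] at h
    -- h : p * (p-1).choose (k-1) = p.choose k * k
    rw [hak k hk1 hk2] at h
    have h2 : p * ((p-1).choose (k-1)) = p * (k * a k) := by
      rw [h]; ring
    have := Nat.eq_of_mul_eq_mul_left hp.pos h2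
    omega
  -- a k mod p
  have hcast : ∀ k, k ≤ p - 1 → (((p-1).choose k : ZMod p)) = (-1)^k := by
    intro k
    induction k with
    | zero => simp
    | succ k ih =>
      intro hk
      have hk' : k ≤ p - 1 := le_of_lt (Nat.lt_of_succ_le hk)
      have h1 : (p-1).choose k + (p-1).choose (k+1) = p.choose (k+1) := by
        have := Nat.choose_succ_succ' (p-1) k
        have hpp : p - 1 + 1 = p := Nat.succ_pred_eq_of_pos hp.pos
        rw [hpp] at this; omega
      have hdvd : p ∣ p.choose (k+1) :=
        hp.dvd_choose_self (Nat.succ_ne_zero k) (by omega)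
      have h2 : ((p.choose (k+1) : ZMod p)) = 0 :=
        (ZMod.natCast_eq_zero_iff _ _).mpr hdvd
      have h3 : ((p-1).choose k : ZMod p) + ((p-1).choose (k+1) : ZMod p) = 0 := by
        rw [← Nat.cast_add, h1, h2]
      rw [ih hk'] at h3
      have : ((p-1).choose (k+1) : ZMod p) = -(-1)^k := by linear_combination h3
      rw [this, pow_succ]; ring
  -- a k squared mod p
  have hasq : ∀ k ∈ Ioo 0 p, ((a k : ZMod p))^2 = (((k:ZMod p))⁻¹)^2 := by
    intro k hk
    obtain ⟨hk1, hk2⟩ := mem_Ioo.mp hk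
    have hkz : (k : ZMod p) ≠ 0 := by
      rw [Ne, ZMod.natCast_eq_zero_iff]
      intro h; exact absurd (Nat.le_of_dvd hk1 h) (by omega)
    have h1 : (k : ZMod p) * (a k) = ((p-1).choose (k-1) : ZMod p) := by
      rw [← Nat.cast_mul, hka k hk1 hk2]
    rw [hcast (k-1) (by omega)] at h1
    have h2 : (a k : ZMod p) = (-1)^(k-1) * ((k:ZMod p))⁻¹ := by
      field_simp at h1 ⊢
      linear_combination h1
    rw [h2, mul_pow, ← pow_mul]
    have : (-1 : ZMod p)^((k-1)*2) = 1 := by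
      rw [mul_comm, pow_mul]; simp
    rw [this, one_mul]
  -- p divides sum of a k squared
  have hdvdS : p ∣ ∑ k ∈ Ioo 0 p, (a k)^2 := by
    rw [← ZMod.natCast_eq_zero_iff]
    push_cast
    rw [Finset.sum_congr rfl hasq, hIoo]
  -- Vandermonde
  have hvan : (2*p).choose p = 2 + p^2 * ∑ k ∈ Ioo 0 p, (a k)^2 := by
    have h1 : (2*p).choose p = ∑ ij ∈ Finset.HasAntidiagonal.antidiagonal p, p.choose ij.1 * p.choose ij.2 := by
      rw [two_mul]; exact Nat.add_choose_eq p p p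
    rw [Finset.Nat.sum_antidiagonal_eq_sum_range_succ_mk] at h1
    have h2 : ∀ k ∈ range (p+1), p.choose k * p.choose (p - k) = (p.choose k)^2 := by
      intro k hk
      rw [mem_range] at hk
      rw [Nat.choose_symm (by omega : k ≤ p) ]
      ring
    rw [Finset.sum_congr rfl h2] at h1
    have h3 : range (p+1) = insert p (insert 0 (Ioo 0 p)) := by
      ext i; simp [Finset.mem_insert, Finset.mem_Ioo]; omega
    rw [h3, Finset.sum_insert (by simp; omega), Finset.sum_insert (by simp)] at h1
    simp only [Nat.choose_self, Nat.choose_zero_right, one_pow] at h1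
    have h4 : ∑ k ∈ Ioo 0 p, (p.choose k)^2 = p^2 * ∑ k ∈ Ioo 0 p, (a k)^2 := by
      rw [Finset.mul_sum]
      apply Finset.sum_congr rfl
      intro k hk
      obtain ⟨hk1, hk2⟩ := mem_Ioo.mp hk
      rw [hak k hk1 hk2]; ring
    omega
  -- mod p^3
  obtain ⟨t, ht⟩ := hdvdS
  have hmod : (2*p).choose p ≡ 2 [MOD p^3] := by
    rw [hvan, ht]
    have : 2 + p^2*(p*t) = 2 + p^3*t := by ring
    rw [this]
    exact (Nat.modEq_iff_dvd' (by omega)).mpr ⟨t, by omega⟩ |>.symm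
  -- halve
  have hpascal : 2 * (2*p-1).choose (p-1) = (2*p).choose p := by
    have h1 : (2*p).choose p = (2*p-1).choose (p-1) + (2*p-1).choose p := by
      have := Nat.choose_succ_succ' (2*p-1) (p-1)
      have e1 : 2*p-1+1 = 2*p := by omega
      have e2 : p-1+1 = p := by omega
      rw [e1, e2] at this
      omega
    have h2 : (2*p-1).choose p = (2*p-1).choose (p-1) := by
      have := Nat.choose_symm (n := 2*p-1) (k := p) (by omega)
      have e : 2*p-1-p = p-1 := by omega
      rw [e] at this
      omega
    omega
  have h2c : 2 * (2*p-1).choose (p-1) ≡ 2 * 1 [MOD p^3] := by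
    rw [hpascal, mul_one]; exact hmod
  refine Nat.ModEq.cancel_left_of_coprime ?_ h2c
  have : ¬ (2 ∣ p) := by
    intro h
    rcases (Nat.Prime.eq_one_or_self_of_dvd hp 2 h) with h' | h' <;> omega
  have hodd : Odd p := Nat.odd_iff.mpr (by omega)
  exact Nat.coprime_two_right.mpr (hodd.pow)

theorem numTerms_modsq (p : ℕ) (hp : p.Prime) (h5 : 5 ≤ p) :
    ((p - 1) + Nat.choose (2 * p - 1) (p - 1)) / p ≡ 1 [MOD p ^ 2] := by
  have hw := wolstenholme p hp h5
  have hpos : 0 < Nat.choose (2*p-1) (p-1) := Nat.choose_pos (by omega)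
  have hdvd : p^3 ∣ Nat.choose (2*p-1) (p-1) - 1 :=
    (Nat.modEq_iff_dvd' hpos).mp hw.symm
  obtain ⟨m, hm⟩ := hdvd
  have hC : Nat.choose (2*p-1) (p-1) = 1 + p^3 * m := by omega
  have h1 : (p - 1) + Nat.choose (2*p-1) (p-1) = p * (1 + p^2 * m) := by
    rw [hC]; ring_nf; omega
  rw [h1, Nat.mul_div_cancel_left _ hp.pos]
  have : 1 + p^2*m ≡ 1 + 0 [MOD p^2] := by
    exact Nat.ModEq.add_left 1 ((Nat.modEq_zero_iff_dvd).mpr ⟨m, rfl⟩)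
  simpa using this
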